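/- Under the Case (ii) standing assumptions and the mean field reward assumptions, the map Ψ : 𝕍×𝕍 → ℝ defined by Ψ(ν₁, μ₁, ν₂, μ₂) = ∫ℓ(x, ν₁) ν₂(dx) + Σ_{i=1}^{d3} ∫ g_i(x, ν₁) μ₂,ᵢ(dx,dy) (which does not depend on μ₁) is continuous, where 𝕍×𝕍 carries the product of the weak-convergence topologies. -/

import Mathlib

open MeasureTheory Filter Topology Set
open scoped NNReal ENNReal

noncomputable section

/-- `ℝ^d` with the Euclidean norm. -/
abbrev Euc (d : ℕ) := EuclideanSpace ℝ (Fin d)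

/-- The nonnegative orthant `[0,∞)^d` as a subset of `ℝ^d`. -/
abbrev Orthant (d : ℕ) : Set (Euc d) := {x | ∀ i, 0 ≤ x i}

/-- The state space `𝕏₊ = [0,∞)^d`. -/
abbrev Xp (d : ℕ) := ↥(Orthant d)

/-- i-th standard basis vector. -/
def esingle {d : ℕ} (i : Fin d) : Euc d := EuclideanSpace.single i (1 : ℝ)

/-- Partial derivative `∂H/∂x_i`. -/
def pd {d : ℕ} (H : Euc d → ℝ) (i : Fin d) (x : Euc d) : ℝ := fderiv ℝ H x (esingle i)

/-- Second partial derivative `∂²H/∂x_i∂x_j`. -/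
def pd2 {d : ℕ} (H : Euc d → ℝ) (i j : Fin d) (x : Euc d) : ℝ :=
  fderiv ℝ (fun y => pd H j y) x (esingle i)

/-- Test functions: twice continuously differentiable with gradient vanishing
outside a compact set.  An element of `C²_b(𝕏₊)` is (the restriction to `𝕏₊` of)
such a function. -/
def TestFun {d : ℕ} (H : Euc d → ℝ) : Prop :=
  ContDiff ℝ 2 H ∧ ∃ K : Set (Euc d), IsCompact K ∧ ∀ x ∉ K, fderiv ℝ H x = 0

/-- Build a Euclidean vector from its coordinates. -/
def vecOf {d : ℕ} (v : Fin d → ℝ) : Euc d := (EuclideanSpace.equiv (Fin d) ℝ).symm v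

variable {d d1 d3 : ℕ}

/-- The second-order generator `𝒜`: for `h ∈ C²_b(𝕏₊)` given by an extension `H`,
`(𝒜h)(x) = (1/2)Σ_{ij} a_{ij}(x) ∂²H/∂x_i∂x_j + Σ_i β_i(x) ∂H/∂x_i`, where `a = σσᵀ`. -/
def genA2 (β : Xp d → Euc d) (σ : Xp d → Fin d → Fin d1 → ℝ)
    (H : Euc d → ℝ) (x : Xp d) : ℝ :=
  (1/2) * ∑ i, ∑ j, (∑ k, σ x i k * σ x j k) * pd2 H i j (x : Euc d)
    + ∑ i, β x i * pd H i (x : Euc d)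

/-- The singular-control operator `ℬ_i`:
`(ℬ_i h)(x,y) = (h(x − yγ(x)e_i) − h(x))/y` for `y > 0` and
`(ℬ_i h)(x,0) = −(γ(x)e_i)·∇h(x)`. -/
def genB2 (γ : Xp d → Fin d → Fin d3 → ℝ) (H : Euc d → ℝ) (i : Fin d3)
    (x : Xp d) (y : ℝ≥0) : ℝ :=
  if 0 < y then (H ((x : Euc d) - (y : ℝ) • vecOf (fun j => γ x j i)) - H (x : Euc d)) / (y : ℝ)
  else - ∑ j, γ x j i * pd H j (x : Euc d)

/-- `V̄(x) = Σ_i x_i^{4r}`. -/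
def Vbar (r : ℝ) (x : Xp d) : ℝ := ∑ i, ((x : Euc d) i) ^ (4*r)

/-- `𝒜V̄` given by the generator formula applied to `V̄`. -/
def AVbar (r : ℝ) (β : Xp d → Euc d) (σ : Xp d → Fin d → Fin d1 → ℝ) (x : Xp d) : ℝ :=
  (1/2) * ∑ i, (∑ k, σ x i k * σ x i k) * ((4*r) * (4*r - 1)) * ((x : Euc d) i) ^ (4*r - 2)
    + ∑ i, β x i * (4*r) * ((x : Euc d) i) ^ (4*r - 1)

/-- The signed integral `∫ u dm ∈ [−∞,∞]` (defined as `∫u⁺ − ∫u⁻` in the extended reals). -/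
def eint {α : Type*} [MeasurableSpace α] (m : Measure α) (u : α → ℝ) : EReal :=
  (∫⁻ a, ENNReal.ofReal (u a) ∂m).toEReal - (∫⁻ a, ENNReal.ofReal (-(u a)) ∂m).toEReal

/-- Feasible pairs `(ν, μ)` of the linear programming formulation of Case (ii):
`ν` is a Borel probability measure on `𝕏₊`, the `μ_i` are finite Borel measures on
`𝕏₊×[0,∞)` supported in `{(x,y) : x − yγ(x)e_i ∈ 𝕏₊}`, for every test function `h`
one has `∫𝒜h dν + Σ_i ∫ℬ_i h dμ_i = 0`, and `∫𝒜V̄ dν ≥ 0`. -/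
def Feasible2 (β : Xp d → Euc d) (σ : Xp d → Fin d → Fin d1 → ℝ)
    (γ : Xp d → Fin d → Fin d3 → ℝ) (r : ℝ)
    (ν : Measure (Xp d)) (μ : Fin d3 → Measure (Xp d × ℝ≥0)) : Prop :=
  IsProbabilityMeasure ν ∧ (∀ i, IsFiniteMeasure (μ i)) ∧
  (∀ i, μ i {p : Xp d × ℝ≥0 |
      ¬ ((p.1 : Euc d) - (p.2 : ℝ) • vecOf (fun j => γ p.1 j i) ∈ Orthant d)} = 0) ∧
  (∀ H : Euc d → ℝ, TestFun H →
      ∫ x, genA2 β σ H x ∂ν + ∑ i, ∫ p, genB2 γ H i p.1 p.2 ∂(μ i) = 0) ∧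
  0 ≤ eint ν (AVbar r β σ)

/-- Standing assumptions of Case (ii). -/
structure CaseIIAssumptions (β : Xp d → Euc d) (σ : Xp d → Fin d → Fin d1 → ℝ)
    (γ : Xp d → Fin d → Fin d3 → ℝ) (r s cσ c₀ c₁ c₂ cγ γbar : ℝ) : Prop where
  hd : 0 < d
  hd1 : 0 < d1
  hd3 : 0 < d3
  hr : 1 ≤ r
  hs : s < 1 + r
  hcσ : 0 < cσ
  hc₀ : 0 < c₀
  hc₁ : 0 < c₁
  hc₂ : 0 < c₂
  hcγ : 0 < cγ
  hγbar : 0 < γbar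
  βcont : Continuous β
  σcont : Continuous σ
  γcont : Continuous γ
  /-- `|σ(x)|² ≤ c_σ(1 + |x|^s)` (Frobenius norm). -/
  σgrowth : ∀ x : Xp d, ∑ i, ∑ k, (σ x i k)^2 ≤ cσ * (1 + ‖(x : Euc d)‖ ^ s)
  /-- `β_i(x) ≤ c₀ − c₁ x_i^r`. -/
  βbound : ∀ (x : Xp d) (i : Fin d), β x i ≤ c₀ - c₁ * ((x : Euc d) i) ^ r
  /-- `|β(x)| ≤ c₂(1 + |x|^{2r})`. -/
  βgrowth : ∀ x : Xp d, ‖β x‖ ≤ c₂ * (1 + ‖(x : Euc d)‖ ^ (2*r))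
  /-- `γ̄ ≤ γ_{ij}(x) ≤ c_γ`. -/
  γbounds : ∀ (x : Xp d) (i : Fin d) (j : Fin d3), γbar ≤ γ x i j ∧ γ x i j ≤ cγ

/-- The feasible set `𝕍`, regarded as a subset of the product of the space of Borel
probability measures on `𝕏₊` and the `d3`-fold product of the space of finite Borel
measures on `𝕏₊×[0,∞)`, each equipped with the topology of weak convergence. -/
def Vset (β : Xp d → Euc d) (σ : Xp d → Fin d → Fin d1 → ℝ)
    (γ : Xp d → Fin d → Fin d3 → ℝ) (r : ℝ) :
    Set (ProbabilityMeasure (Xp d) × (Fin d3 → FiniteMeasure (Xp d × ℝ≥0))) :=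
  {p | Feasible2 β σ γ r p.1.toMeasure (fun i => (p.2 i).toMeasure)}

/-- Mean field reward assumptions: for each fixed measure argument the rewards are
continuous and bounded in the state, `g` is nonnegative, and the rewards are Lipschitz in
the measure argument with respect to the Lévy–Prokhorov metric `d_P`. -/
structure MFRewardAssumptions {d d3 : ℕ} (ℓ : Xp d → ProbabilityMeasure (Xp d) → ℝ)
    (g : Fin d3 → Xp d → ProbabilityMeasure (Xp d) → ℝ) (L : ℝ) : Prop where
  hL : 0 ≤ L
  ℓcont : ∀ ν' : ProbabilityMeasure (Xp d), Continuous (fun x => ℓ x ν')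
  ℓbdd : ∀ ν' : ProbabilityMeasure (Xp d), ∃ C, ∀ x, |ℓ x ν'| ≤ C
  gcont : ∀ (i : Fin d3) (ν' : ProbabilityMeasure (Xp d)), Continuous (fun x => g i x ν')
  gbdd : ∀ (i : Fin d3) (ν' : ProbabilityMeasure (Xp d)), ∃ C, ∀ x, g i x ν' ≤ C
  gpos : ∀ i x ν', 0 ≤ g i x ν'
  ℓlip : ∀ (x : Xp d) (ν₁ ν₂ : ProbabilityMeasure (Xp d)),
    |ℓ x ν₁ - ℓ x ν₂| ≤ L * levyProkhorovDist ν₁.toMeasure ν₂.toMeasure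
  glip : ∀ (i : Fin d3) (x : Xp d) (ν₁ ν₂ : ProbabilityMeasure (Xp d)),
    |g i x ν₁ - g i x ν₂| ≤ L * levyProkhorovDist ν₁.toMeasure ν₂.toMeasure

/-
Splitting `∫ f(x, p) dm - ∫ f(x, p₀) dm₀` at `∫ f(x, p₀) dm`, the first part is at most
`L · dist p p₀ · mass m` by the uniform Lipschitz bound, and the second converges by weak continuity
of `m ↦ ∫ f(·, p₀) dm` for the bounded continuous function `f(·, p₀)`. For `Ψ`, `P` is the space of
probability measures with the Lévy–Prokhorov metric, whose topology on a separable space is the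
weak topology.
-/

section UniformlyLipschitzIntegrand

variable {X P : Type*} [TopologicalSpace X] [MeasurableSpace X] [OpensMeasurableSpace X]
  [PseudoMetricSpace P] {f : X → P → ℝ} {L : ℝ}

lemma integrable_of_continuous_of_abs_le {g : X → ℝ} (hg : Continuous g) {C : ℝ}
    (hC : ∀ x, |g x| ≤ C) (m : FiniteMeasure X) : Integrable g (m : Measure X) :=
  Integrable.of_bound hg.aestronglyMeasurable C (.of_forall hC)

lemma norm_integral_sub_integral_le_mul_mass (hf : ∀ p, Continuous fun x => f x p)
    (hb : ∀ p, ∃ C, ∀ x, |f x p| ≤ C) (hlip : ∀ x p q, |f x p - f x q| ≤ L * dist p q)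
    (m : FiniteMeasure X) (p q : P) :
    ‖∫ x, f x p ∂(m : Measure X) - ∫ x, f x q ∂(m : Measure X)‖ ≤ L * dist p q * m.mass := by
  obtain ⟨Cp, hCp⟩ := hb p
  obtain ⟨Cq, hCq⟩ := hb q
  rw [← integral_sub (integrable_of_continuous_of_abs_le (hf p) hCp m)
    (integrable_of_continuous_of_abs_le (hf q) hCq m)]
  calc ‖∫ x, (f x p - f x q) ∂(m : Measure X)‖
      ≤ L * dist p q * ((m : Measure X) univ).toReal :=
        norm_integral_le_of_norm_le_const (.of_forall fun x => hlip x p q)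
    _ = L * dist p q * m.mass := by rw [← FiniteMeasure.ennreal_mass, ENNReal.coe_toReal]

lemma continuous_integral_of_lipschitz (hf : ∀ p, Continuous fun x => f x p)
    (hb : ∀ p, ∃ C, ∀ x, |f x p| ≤ C) (hlip : ∀ x p q, |f x p - f x q| ≤ L * dist p q) :
    Continuous fun q : P × FiniteMeasure X => ∫ x, f x q.1 ∂(q.2 : Measure X) := by
  rw [continuous_iff_continuousAt]
  rintro ⟨p₀, m₀⟩
  obtain ⟨C₀, hC₀⟩ := hb p₀
  let F₀ : BoundedContinuousFunction X ℝ :=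
    .ofNormedAddCommGroup (fun x => f x p₀) (hf p₀) C₀ (by simpa only [Real.norm_eq_abs])
  have fixed_tendsto : Tendsto (fun q : P × FiniteMeasure X => ∫ x, f x p₀ ∂(q.2 : Measure X))
      (𝓝 (p₀, m₀)) (𝓝 (∫ x, f x p₀ ∂(m₀ : Measure X))) :=
    ((FiniteMeasure.continuous_integral_boundedContinuousFunction F₀).comp
      continuous_snd).tendsto _
  have bound_tendsto : Tendsto (fun q : P × FiniteMeasure X => L * dist q.1 p₀ * q.2.mass)
      (𝓝 (p₀, m₀)) (𝓝 0) := by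
    have hcont : Continuous fun q : P × FiniteMeasure X => L * dist q.1 p₀ * q.2.mass := by
      fun_prop
    simpa only [dist_self, mul_zero, zero_mul] using hcont.tendsto (p₀, m₀)
  have diff_tendsto := squeeze_zero_norm (fun q : P × FiniteMeasure X =>
    norm_integral_sub_integral_le_mul_mass hf hb hlip q.2 q.1 p₀) bound_tendsto
  simpa only [ContinuousAt, sub_add_cancel, zero_add] using diff_tendsto.add fixed_tendsto

end UniformlyLipschitzIntegrand

lemma continuous_integral_of_levyProkhorov_lipschitz {X Ω : Type*} [TopologicalSpace X]
    [MeasurableSpace X] [OpensMeasurableSpace X] [PseudoMetricSpace Ω] [MeasurableSpace Ω]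
    [OpensMeasurableSpace Ω] [TopologicalSpace.SeparableSpace Ω]
    {f : X → ProbabilityMeasure Ω → ℝ} {L : ℝ} (hf : ∀ ν, Continuous fun x => f x ν)
    (hb : ∀ ν, ∃ C, ∀ x, |f x ν| ≤ C)
    (hlip : ∀ x ν₁ ν₂, |f x ν₁ - f x ν₂| ≤ L * levyProkhorovDist ν₁.toMeasure ν₂.toMeasure) :
    Continuous fun q : ProbabilityMeasure Ω × FiniteMeasure X => ∫ x, f x q.1 ∂(q.2 : Measure X) :=
  (continuous_integral_of_lipschitz (P := LevyProkhorov (ProbabilityMeasure Ω))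
      (f := fun x ν => f x ν.toMeasure) (fun _ => hf _) (fun _ => hb _)
      (fun x _ _ => hlip x _ _)).comp
    ((LevyProkhorov.continuous_ofMeasure_probabilityMeasure.comp continuous_fst).prodMk
      continuous_snd)

set_option synthInstance.maxSize 512

theorem stmt12_general {d d1 d3 : ℕ} (β : Xp d → Euc d) (σ : Xp d → Fin d → Fin d1 → ℝ)
    (γ : Xp d → Fin d → Fin d3 → ℝ) (r : ℝ)
    (ℓ : Xp d → ProbabilityMeasure (Xp d) → ℝ)
    (g : Fin d3 → Xp d → ProbabilityMeasure (Xp d) → ℝ) (L : ℝ)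
    (hrew : MFRewardAssumptions ℓ g L) :
    Continuous (fun q : ↥(Vset β σ γ r) × ↥(Vset β σ γ r) =>
      ∫ x, ℓ x q.1.val.1 ∂(q.2.val.1.toMeasure)
        + ∑ i, ∫ p, g i p.1 q.1.val.1 ∂((q.2.val.2 i).toMeasure)) := by
  have hν₁ : Continuous fun q : ↥(Vset β σ γ r) × ↥(Vset β σ γ r) => q.1.val.1 :=
    (continuous_subtype_val.comp continuous_fst).fst
  have hν₂ : Continuous fun q : ↥(Vset β σ γ r) × ↥(Vset β σ γ r) => q.2.val.1.toFiniteMeasure :=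
    ProbabilityMeasure.toFiniteMeasure_continuous.comp
      (continuous_subtype_val.comp continuous_snd).fst
  have hμ₂ (i : Fin d3) : Continuous fun q : ↥(Vset β σ γ r) × ↥(Vset β σ γ r) => q.2.val.2 i :=
    (continuous_apply i).comp (continuous_subtype_val.comp continuous_snd).snd
  have hg_abs (i : Fin d3) (ν : ProbabilityMeasure (Xp d)) :
      ∃ C, ∀ p : Xp d × ℝ≥0, |g i p.1 ν| ≤ C := by
    obtain ⟨C, hC⟩ := hrew.gbdd i ν
    exact ⟨C, fun p => (abs_of_nonneg (hrew.gpos i p.1 ν)).trans_le (hC p.1)⟩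
  have hℓ_term := (continuous_integral_of_levyProkhorov_lipschitz hrew.ℓcont hrew.ℓbdd
    hrew.ℓlip).comp (hν₁.prodMk hν₂)
  have hg_term (i : Fin d3) := (continuous_integral_of_levyProkhorov_lipschitz
    (f := fun p ν => g i p.1 ν) (fun ν => (hrew.gcont i ν).fst') (hg_abs i)
    (fun p => hrew.glip i p.1)).comp (hν₁.prodMk (hμ₂ i))
  exact hℓ_term.add (continuous_finsetSum _ fun i _ => hg_term i)

/-- Under the Case (ii) standing assumptions and the mean field reward
assumptions, the map `Ψ : 𝕍×𝕍 → ℝ`,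
`Ψ(ν₁,μ₁,ν₂,μ₂) = ∫ℓ(x,ν₁) ν₂(dx) + Σ_i ∫g_i(x,ν₁) μ₂ᵢ(dx,dy)` (not depending on `μ₁`),
is continuous for the product of the weak-convergence topologies. -/
theorem stmt12 {d d1 d3 : ℕ} (β : Xp d → Euc d) (σ : Xp d → Fin d → Fin d1 → ℝ)
    (γ : Xp d → Fin d → Fin d3 → ℝ) (r s cσ c₀ c₁ c₂ cγ γbar : ℝ)
    (hass : CaseIIAssumptions β σ γ r s cσ c₀ c₁ c₂ cγ γbar)
    (ℓ : Xp d → ProbabilityMeasure (Xp d) → ℝ)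
    (g : Fin d3 → Xp d → ProbabilityMeasure (Xp d) → ℝ) (L : ℝ)
    (hrew : MFRewardAssumptions ℓ g L) :
    Continuous (fun q : ↥(Vset β σ γ r) × ↥(Vset β σ γ r) =>
      ∫ x, ℓ x q.1.val.1 ∂(q.2.val.1.toMeasure)
        + ∑ i, ∫ p, g i p.1 q.1.val.1 ∂((q.2.val.2 i).toMeasure)) :=
  stmt12_general β σ γ r ℓ g L hrew
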